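/- arXiv:1412.6176 — 2 statements merged into one kernel-verified Lean document; each statement's English description precedes it below -/
import Mathlib

section
/- Let p be a prime and n ≥ 1. Any two P_n-conjugates of σ_{n−1} commute with each other; that is, for all x, y ∈ P_n we have (x σ_{n−1} x^{-1})(y σ_{n−1} y^{-1}) = (y σ_{n−1} y^{-1})(x σ_{n−1} x^{-1}). -/
variable (p n : ℕ)

/-- The underlying function of the generator `σ_i`. -/
def sigmaFun (i : Fin n) (lam : Fin n → ZMod p) : Fin n → ZMod p :=
  fun k => if k = i ∧ ∀ j : Fin n, j < i → lam j = 0 then lam k + 1 else lam k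

lemma sigmaFun_apply_ne (i : Fin n) (lam : Fin n → ZMod p) {k : Fin n} (h : k ≠ i) :
    sigmaFun p n i lam k = lam k := by
  simp [sigmaFun, h]

/-- The inverse function of `σ_i`. -/
def sigmaInvFun (i : Fin n) (lam : Fin n → ZMod p) : Fin n → ZMod p :=
  fun k => if k = i ∧ ∀ j : Fin n, j < i → lam j = 0 then lam k - 1 else lam k

lemma sigmaInvFun_apply_ne (i : Fin n) (lam : Fin n → ZMod p) {k : Fin n} (h : k ≠ i) :
    sigmaInvFun p n i lam k = lam k := by
  simp [sigmaInvFun, h]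

lemma sigmaFun_cond (i : Fin n) (lam : Fin n → ZMod p) :
    (∀ j : Fin n, j < i → sigmaFun p n i lam j = 0) ↔ (∀ j : Fin n, j < i → lam j = 0) := by
  constructor
  · intro h j hj
    have := h j hj
    rwa [sigmaFun_apply_ne p n i lam (ne_of_lt hj)] at this
  · intro h j hj
    rw [sigmaFun_apply_ne p n i lam (ne_of_lt hj)]
    exact h j hj

lemma sigmaInvFun_cond (i : Fin n) (lam : Fin n → ZMod p) :
    (∀ j : Fin n, j < i → sigmaInvFun p n i lam j = 0) ↔ (∀ j : Fin n, j < i → lam j = 0) := by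
  constructor
  · intro h j hj
    have := h j hj
    rwa [sigmaInvFun_apply_ne p n i lam (ne_of_lt hj)] at this
  · intro h j hj
    rw [sigmaInvFun_apply_ne p n i lam (ne_of_lt hj)]
    exact h j hj

/-- The generator `σ_i` of the Sylow `p`-subgroup of `Sym(F_p^n)`: it fixes
`(λ_0, …, λ_{n-1})` if `λ_j ≠ 0` for some `j < i`, and otherwise replaces the entry
`λ_i` by `λ_i + 1`. -/
def sigmaPerm (i : Fin n) : Equiv.Perm (Fin n → ZMod p) where
  toFun := sigmaFun p n i
  invFun := sigmaInvFun p n i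
  left_inv := by
    intro lam
    funext k
    by_cases hk : k = i
    · subst hk
      show sigmaInvFun p n k (sigmaFun p n k lam) k = lam k
      by_cases hc : ∀ j : Fin n, j < k → lam j = 0
      · have hC : ∀ j : Fin n, j < k → sigmaFun p n k lam j = 0 :=
          (sigmaFun_cond p n k lam).mpr hc
        unfold sigmaInvFun
        rw [if_pos ⟨rfl, hC⟩]
        unfold sigmaFun
        rw [if_pos ⟨rfl, hc⟩]
        ring
      · have hC : ¬ ∀ j : Fin n, j < k → sigmaFun p n k lam j = 0 :=
          fun h => hc ((sigmaFun_cond p n k lam).mp h)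
        unfold sigmaInvFun
        rw [if_neg (by tauto)]
        unfold sigmaFun
        rw [if_neg (by tauto)]
    · exact (sigmaInvFun_apply_ne p n i _ hk).trans (sigmaFun_apply_ne p n i lam hk)
  right_inv := by
    intro lam
    funext k
    by_cases hk : k = i
    · subst hk
      show sigmaFun p n k (sigmaInvFun p n k lam) k = lam k
      by_cases hc : ∀ j : Fin n, j < k → lam j = 0
      · have hC : ∀ j : Fin n, j < k → sigmaInvFun p n k lam j = 0 :=
          (sigmaInvFun_cond p n k lam).mpr hc
        unfold sigmaFun
        rw [if_pos ⟨rfl, hC⟩]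
        unfold sigmaInvFun
        rw [if_pos ⟨rfl, hc⟩]
        ring
      · have hC : ¬ ∀ j : Fin n, j < k → sigmaInvFun p n k lam j = 0 :=
          fun h => hc ((sigmaInvFun_cond p n k lam).mp h)
        unfold sigmaFun
        rw [if_neg (by tauto)]
        unfold sigmaInvFun
        rw [if_neg (by tauto)]
    · exact (sigmaFun_apply_ne p n i _ hk).trans (sigmaInvFun_apply_ne p n i lam hk)

/-- `P_n = ⟨σ_0, …, σ_{n-1}⟩`, a Sylow `p`-subgroup of `Sym(F_p^n)`. -/
def PSyl : Subgroup (Equiv.Perm (Fin n → ZMod p)) :=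
  Subgroup.closure (Set.range (sigmaPerm p n))

/-! Let `τ` be translation by the last basis vector `e_{n-1}`. Every generator `σ_i` commutes
with `τ`, hence so does all of `P_n`, and `σ_{n-1}` is `τ` on a `τ`-stable set and the identity
elsewhere. Conjugation by an element commuting with `τ` preserves this shape, and any two
permutations of this shape commute. -/

namespace Equiv.Perm

variable {α : Type*}

/-- `g` is `τ` on a `τ`-stable set of points and the identity elsewhere. -/
def IsPieceOf (g τ : Perm α) : Prop :=
  Commute g τ ∧ ∀ a, g a = a ∨ g a = τ a

variable {g h x τ : Perm α}

theorem IsPieceOf.apply_comm (hg : IsPieceOf g τ) (a : α) : g (τ a) = τ (g a) :=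
  congrArg (· a) hg.1.eq

theorem IsPieceOf.commute (hg : IsPieceOf g τ) (hh : IsPieceOf h τ) : Commute g h := by
  ext a
  simp only [Perm.mul_apply]
  rcases hh.2 a with ha | ha <;> rcases hg.2 a with ga | ga
  · rw [ha, ga, ha]
  · rw [ha, ga, hh.apply_comm, ha]
  · rw [ha, ga, hg.apply_comm, ga, ha]
  · rw [ha, ga, hg.apply_comm, hh.apply_comm, ga, ha]

theorem IsPieceOf.conj (hg : IsPieceOf g τ) (hx : Commute x τ) :
    IsPieceOf (x * g * x⁻¹) τ := by
  refine ⟨(hx.mul_left hg.1).mul_left hx.inv_left, fun a => ?_⟩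
  simp only [Perm.mul_apply]
  rcases hg.2 (x⁻¹ a) with hb | hb <;> rw [hb]
  · exact Or.inl (by simp)
  · exact Or.inr (by rw [← mul_apply, hx.eq, mul_apply]; simp)

end Equiv.Perm

open Equiv.Perm

section

variable {p n}

theorem sigmaPerm_apply (i : Fin n) (lam : Fin n → ZMod p) :
    sigmaPerm p n i lam = if ∀ j < i, lam j = 0 then lam + Pi.single i 1 else lam := by
  funext k
  show (if _ then _ else _) = _
  split_ifs <;> simp_all

theorem sigmaPerm_commute_addRight_single {k i : Fin n} (hki : k ≤ i) :
    Commute (sigmaPerm p n k) (Equiv.addRight (Pi.single i (1 : ZMod p))) := by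
  ext lam : 1
  have hcond : (∀ j < k, (lam + Pi.single i 1 : Fin n → ZMod p) j = 0) ↔ ∀ j < k, lam j = 0 := by
    refine forall₂_congr fun j hj => ?_
    rw [Pi.add_apply, Pi.single_eq_of_ne (hj.trans_le hki).ne, add_zero]
  simp only [Equiv.Perm.mul_apply, Equiv.coe_addRight, sigmaPerm_apply, hcond]
  split_ifs <;> abel

theorem sigmaPerm_isPieceOf_addRight_single (i : Fin n) :
    IsPieceOf (sigmaPerm p n i) (Equiv.addRight (Pi.single i 1)) := by
  refine ⟨sigmaPerm_commute_addRight_single le_rfl, fun lam => ?_⟩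
  rw [sigmaPerm_apply]
  split_ifs
  exacts [Or.inr rfl, Or.inl rfl]

theorem commute_addRight_single_of_mem_PSyl {i : Fin n} (hi : IsTop i)
    {x : Equiv.Perm (Fin n → ZMod p)} (hx : x ∈ PSyl p n) :
    Commute x (Equiv.addRight (Pi.single i 1)) := by
  have hle : PSyl p n ≤ Subgroup.centralizer {Equiv.addRight (Pi.single i 1)} := by
    rw [PSyl, Subgroup.closure_le]
    rintro _ ⟨k, rfl⟩
    exact Subgroup.mem_centralizer_singleton_iff.2 (sigmaPerm_commute_addRight_single (hi k)).eq
  exact Subgroup.mem_centralizer_singleton_iff.1 (hle hx)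

end

/-- Any two `P_n`-conjugates of `σ_{n-1}` commute with each other. -/
theorem conjugates_of_sigma_last_commute (hn : 1 ≤ n)
    (x y : Equiv.Perm (Fin n → ZMod p)) (hx : x ∈ PSyl p n) (hy : y ∈ PSyl p n) :
    (x * sigmaPerm p n ⟨n - 1, by omega⟩ * x⁻¹) * (y * sigmaPerm p n ⟨n - 1, by omega⟩ * y⁻¹)
      = (y * sigmaPerm p n ⟨n - 1, by omega⟩ * y⁻¹) * (x * sigmaPerm p n ⟨n - 1, by omega⟩ * x⁻¹) := by
  have hlast : IsTop (⟨n - 1, by omega⟩ : Fin n) := fun k => Fin.le_def.2 (by simp only; omega)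
  have hσ := sigmaPerm_isPieceOf_addRight_single (p := p) (⟨n - 1, by omega⟩ : Fin n)
  exact ((hσ.conj (commute_addRight_single_of_mem_PSyl hlast hx)).commute
    (hσ.conj (commute_addRight_single_of_mem_PSyl hlast hy))).eq
end

section
/- Let p be a prime and n ≥ 2. Every abelian normal subgroup B of P_n is contained in T_{n−2}. -/
variable (p n : ℕ)

/-- Weir's filtration subgroup `T_j`: the normal closure in `P_n` of
`⟨σ_j, …, σ_{n-1}⟩`, i.e. the subgroup generated by all `P_n`-conjugates of the
`σ_i` with `i ≥ j`. -/
def TFilt (j : ℕ) : Subgroup (Equiv.Perm (Fin n → ZMod p)) :=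
  Subgroup.closure
    {x | ∃ g ∈ PSyl p n, ∃ i : Fin n, j ≤ (i : ℕ) ∧ x = g * sigmaPerm p n i * g⁻¹}

/-!
By induction on `m ≤ n - 2`, every element of `B` fixes the coordinates below `m`; an element of
`P_n` doing so lies in `T_m`, because `P_n = T_m · H_m` where `H_m ≤ P_n` fixes the coordinates
from `m` on.

For the inductive step, suppose `b ∈ B` moves coordinate `l` at `x`. Elements of `P_n` are
triangular, so `b` shifts coordinate `l` by the same nonzero amount on the whole block `X` of points
that agree with `x` below `l` and vanish at `l`; hence `b` and `b⁻¹` move `X` off itself. For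
`g ∈ P_n` supported on `X`, `b` commutes with `g b g⁻¹ ∈ B`, and this forces `g² = 1`. So the
elements of `P_n` supported on `X` form a group of exponent two, hence commute. But the conjugates
of `σ_{l+1}` and `σ_{l+2}` by an element of `P_n` carrying the zero block onto `X` are supported on
`X` and do not commute.
-/

open Equiv Function

namespace Equiv.Perm

variable {α : Type*}

@[simp]
theorem apply_inv_self (f : Perm α) (x : α) : f (f⁻¹ x) = x :=
  f.apply_symm_apply x

@[simp]
theorem inv_apply_self (f : Perm α) (x : α) : f⁻¹ (f x) = x :=
  f.symm_apply_apply x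

theorem sq_eq_one_of_commute_conj {X : Set α} {b g : Perm α}
    (hbX : ∀ x ∈ X, b x ∉ X) (hbX' : ∀ x ∈ X, b⁻¹ x ∉ X) (hg : ∀ x ∉ X, g x = x)
    (hcomm : Commute b (g * b * g⁻¹)) : g ^ 2 = 1 := by
  have hg' : ∀ x ∉ X, g⁻¹ x = x := fun x hx => inv_eq_iff_eq.mpr (hg x hx).symm
  have hgX : ∀ x ∈ X, g⁻¹ x ∈ X := fun x hx => by
    by_contra h
    have := hg _ h
    rw [apply_inv_self] at this
    exact h (this ▸ hx)
  ext y : 1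
  by_cases hy : y ∈ X
  · -- evaluate `b * (g b g⁻¹) = (g b g⁻¹) * b` at `b⁻¹ y`, which lies outside `X`
    have h := congrArg (· (b⁻¹ y)) hcomm.eq
    simp only [mul_apply, hg' _ (hbX' y hy), apply_inv_self, hg _ (hbX _ (hgX y hy))] at h
    rw [sq, mul_apply, b.injective h, apply_inv_self, one_apply]
  · simp [sq, hg y hy]

end Equiv.Perm

theorem commute_of_sq_eq_one {G : Type*} [Group G] {a b : G} (ha : a ^ 2 = 1) (hb : b ^ 2 = 1)
    (hab : (a * b) ^ 2 = 1) : Commute a b := by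
  rw [sq, mul_eq_one_iff_eq_inv] at ha hb hab
  rw [commute_iff_eq, hab, mul_inv_rev, ← ha, ← hb]

section

variable {p n}

theorem sigmaPerm_apply_ne (i : Fin n) (x : Fin n → ZMod p) {k : Fin n} (h : k ≠ i) :
    sigmaPerm p n i x k = x k :=
  sigmaFun_apply_ne p n i x h

theorem sigmaPerm_apply_of_forall {i : Fin n} {x : Fin n → ZMod p} (h : ∀ j < i, x j = 0) :
    sigmaPerm p n i x = update x i (x i + 1) := by
  ext k
  by_cases hk : k = i
  · subst hk
    show sigmaFun p n k x k = _
    simp only [sigmaFun, update_self, if_pos (And.intro trivial h)]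
  · rw [sigmaPerm_apply_ne i x hk, update_of_ne hk]

theorem sigmaPerm_apply_of_not_forall {i : Fin n} {x : Fin n → ZMod p}
    (h : ¬ ∀ j < i, x j = 0) : sigmaPerm p n i x = x := by
  ext k
  simp [sigmaPerm, sigmaFun, h]

theorem sigmaPerm_pow_apply {i : Fin n} {x : Fin n → ZMod p} (h : ∀ j < i, x j = 0) (m : ℕ) :
    (sigmaPerm p n i ^ m) x = update x i (x i + m) := by
  induction m with
  | zero => simp
  | succ m ih =>
    have h' : ∀ j < i, update x i (x i + m) j = 0 := fun j hj => by
      rw [update_of_ne hj.ne, h j hj]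
    rw [pow_succ', Perm.mul_apply, ih, sigmaPerm_apply_of_forall h']
    simp [add_assoc]

theorem sigmaPerm_mem_PSyl (i : Fin n) : sigmaPerm p n i ∈ PSyl p n :=
  Subgroup.subset_closure (Set.mem_range_self i)

theorem sigmaPerm_mul_ne [Nontrivial (ZMod p)] {i k : Fin n} (hik : i < k) :
    sigmaPerm p n i * sigmaPerm p n k ≠ sigmaPerm p n k * sigmaPerm p n i := by
  intro h
  have h0 := congrArg (fun e : Perm (Fin n → ZMod p) => e 0 k) h
  have hzero : ∀ l : Fin n, ∀ j < l, (0 : Fin n → ZMod p) j = 0 := fun _ _ _ => rfl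
  have hk : ¬ ∀ j < k, update (0 : Fin n → ZMod p) i 1 j = 0 := fun hk => by
    simpa using hk i hik
  simp only [Perm.mul_apply, sigmaPerm_apply_of_forall (hzero _), Pi.zero_apply, zero_add,
    sigmaPerm_apply_ne _ _ hik.ne', sigmaPerm_apply_of_not_forall hk, update_self,
    update_of_ne hik.ne'] at h0
  exact one_ne_zero h0

/-- Kaloujnine's description of `P_n`: coordinate `l` is shifted by an amount that depends only
on the coordinates below `l`. -/
def IsTriangular (e : Perm (Fin n → ZMod p)) : Prop :=
  ∀ (l : Fin n) (x y : Fin n → ZMod p), (∀ j < l, x j = y j) → e x l - x l = e y l - y l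

namespace IsTriangular

variable {e f : Perm (Fin n → ZMod p)}

theorem apply_eq_apply (he : IsTriangular e) {m : ℕ} {x y : Fin n → ZMod p}
    (h : ∀ j : Fin n, (j : ℕ) < m → x j = y j) (j : Fin n) (hj : (j : ℕ) < m) :
    e x j = e y j := by
  have := he j x y fun k hk => h k (lt_trans hk hj)
  rwa [h j hj, sub_left_inj] at this

theorem mul (he : IsTriangular e) (hf : IsTriangular f) : IsTriangular (e * f) := by
  intro l x y h
  have h1 := he l (f x) (f y) (hf.apply_eq_apply h)
  have h2 := hf l x y h
  simp only [Perm.mul_apply]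
  linear_combination h1 + h2

theorem inv (he : IsTriangular e) : IsTriangular e⁻¹ := by
  intro l x y h
  have h' : ∀ j < l, e⁻¹ x j = e⁻¹ y j := by
    intro j hj
    induction j using WellFoundedLT.induction with
    | ind j ih =>
      have := he j (e⁻¹ x) (e⁻¹ y) fun k hk => ih k hk (hk.trans hj)
      rw [Perm.apply_inv_self, Perm.apply_inv_self, h j hj] at this
      linear_combination -this
  have := he l (e⁻¹ x) (e⁻¹ y) h'
  simp only [Perm.apply_inv_self] at this
  linear_combination -this

end IsTriangular

theorem isTriangular_sigmaPerm (i : Fin n) : IsTriangular (sigmaPerm p n i) := by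
  intro l x y h
  by_cases hl : l = i
  · subst hl
    by_cases hx : ∀ j < l, x j = 0
    · have hy : ∀ j < l, y j = 0 := fun j hj => h j hj ▸ hx j hj
      simp [sigmaPerm_apply_of_forall hx, sigmaPerm_apply_of_forall hy]
    · have hy : ¬ ∀ j < l, y j = 0 := fun hy => hx fun j hj => (h j hj).trans (hy j hj)
      simp [sigmaPerm_apply_of_not_forall hx, sigmaPerm_apply_of_not_forall hy]
  · simp [sigmaPerm_apply_ne _ _ hl]

theorem isTriangular_of_mem_PSyl {e : Perm (Fin n → ZMod p)} (he : e ∈ PSyl p n) :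
    IsTriangular e := by
  induction he using Subgroup.closure_induction with
  | mem _ hx => obtain ⟨i, rfl⟩ := hx; exact isTriangular_sigmaPerm i
  | one => intro l x y _; simp
  | mul _ _ _ _ he hf => exact he.mul hf
  | inv _ _ he => exact he.inv

variable (p) in
def fixingCoords (S : Set (Fin n)) : Subgroup (Perm (Fin n → ZMod p)) where
  carrier := {e | ∀ x, ∀ i ∈ S, e x i = x i}
  one_mem' _ _ _ := rfl
  mul_mem' ha hb x i hi := by rw [Perm.mul_apply, ha _ i hi, hb x i hi]
  inv_mem' {e} he x i hi := by simpa using (he (e⁻¹ x) i hi).symm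

theorem fixingCoords_inf_compl (S : Set (Fin n)) :
    fixingCoords p S ⊓ fixingCoords p Sᶜ = ⊥ := by
  refine eq_bot_iff.mpr fun e ⟨hS, hSc⟩ => Subgroup.mem_bot.mpr ?_
  ext x i
  by_cases hi : i ∈ S
  · exact hS x i hi
  · exact hSc x i hi

theorem sigmaPerm_mem_fixingCoords {S : Set (Fin n)} {i : Fin n} (hi : i ∉ S) :
    sigmaPerm p n i ∈ fixingCoords p S :=
  fun x _ hk => sigmaPerm_apply_ne i x (ne_of_mem_of_not_mem hk hi)

theorem IsTriangular.conj_mem_fixingCoords_lt {g e : Perm (Fin n → ZMod p)} {m : ℕ}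
    (hg : IsTriangular g) (he : e ∈ fixingCoords p {k | (k : ℕ) < m}) :
    g * e * g⁻¹ ∈ fixingCoords p {k | (k : ℕ) < m} := by
  intro x k hk
  simpa using hg.apply_eq_apply (fun j hj => he (g⁻¹ x) j hj) k hk

theorem TFilt_le_fixingCoords (j : ℕ) : TFilt p n j ≤ fixingCoords p {k | (k : ℕ) < j} := by
  refine (Subgroup.closure_le _).mpr ?_
  rintro _ ⟨g, hg, i, hij, rfl⟩
  exact (isTriangular_of_mem_PSyl hg).conj_mem_fixingCoords_lt
    (sigmaPerm_mem_fixingCoords (by simpa using hij))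

theorem sigmaPerm_mem_TFilt {j : ℕ} {i : Fin n} (hij : j ≤ i) : sigmaPerm p n i ∈ TFilt p n j :=
  Subgroup.subset_closure ⟨1, one_mem _, i, hij, by group⟩

theorem conj_mem_TFilt {j : ℕ} {g x : Perm (Fin n → ZMod p)} (hg : g ∈ PSyl p n)
    (hx : x ∈ TFilt p n j) : g * x * g⁻¹ ∈ TFilt p n j := by
  induction hx using Subgroup.closure_induction with
  | mem _ hy =>
    obtain ⟨h, hh, i, hij, rfl⟩ := hy
    exact Subgroup.subset_closure ⟨g * h, mul_mem hg hh, i, hij, by group⟩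
  | one => simp
  | mul a b _ _ ha hb => simpa [mul_assoc] using mul_mem ha hb
  | inv a _ ha => simpa [mul_assoc] using inv_mem ha

theorem exists_mem_TFilt_mul_eq (j : ℕ) {x : Perm (Fin n → ZMod p)} (hx : x ∈ PSyl p n) :
    ∃ t ∈ TFilt p n j, ∃ s ∈ PSyl p n ⊓ fixingCoords p {k | (k : ℕ) < j}ᶜ, x = t * s := by
  induction hx using Subgroup.closure_induction with
  | mem _ hy =>
    obtain ⟨i, rfl⟩ := hy
    by_cases hij : j ≤ i
    · exact ⟨_, sigmaPerm_mem_TFilt hij, 1, one_mem _, (mul_one _).symm⟩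
    · refine ⟨1, one_mem _, _, ⟨sigmaPerm_mem_PSyl i, ?_⟩, (one_mul _).symm⟩
      exact sigmaPerm_mem_fixingCoords (by simpa using hij)
  | one => exact ⟨1, one_mem _, 1, one_mem _, (mul_one 1).symm⟩
  | mul _ _ _ _ hx hy =>
    obtain ⟨t, ht, s, hs, rfl⟩ := hx
    obtain ⟨t', ht', s', hs', rfl⟩ := hy
    exact ⟨t * (s * t' * s⁻¹), mul_mem ht (conj_mem_TFilt hs.1 ht'), s * s', mul_mem hs hs',
      by group⟩
  | inv _ _ hx =>
    obtain ⟨t, ht, s, hs, rfl⟩ := hx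
    exact ⟨s⁻¹ * t⁻¹ * s⁻¹⁻¹, conj_mem_TFilt (inv_mem hs.1) (inv_mem ht), s⁻¹, inv_mem hs,
      by group⟩

theorem PSyl_inf_fixingCoords_le_TFilt (j : ℕ) :
    PSyl p n ⊓ fixingCoords p {k | (k : ℕ) < j} ≤ TFilt p n j := by
  rintro x ⟨hxP, hxK⟩
  obtain ⟨t, ht, s, ⟨-, hsH⟩, rfl⟩ := exists_mem_TFilt_mul_eq j hxP
  have hsK : s ∈ fixingCoords p {k | (k : ℕ) < j} := by
    simpa using mul_mem (inv_mem (TFilt_le_fixingCoords j ht)) hxK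
  have hs : s = 1 := by
    rw [← Subgroup.mem_bot, ← fixingCoords_inf_compl]
    exact ⟨hsK, hsH⟩
  simpa [hs] using ht

theorem exists_mem_PSyl_apply_eq [NeZero p] (a : Fin n → ZMod p) {m : ℕ} (hm : m ≤ n) :
    ∃ u ∈ PSyl p n, ∀ x : Fin n → ZMod p, (∀ j : Fin n, (j : ℕ) < m → x j = 0) →
      ∀ i, u x i = if (i : ℕ) < m then a i else x i := by
  induction m with
  | zero => exact ⟨1, one_mem _, fun x _ i => by simp⟩
  | succ m ih =>
    obtain ⟨u, hu, hux⟩ := ih (by omega)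
    set k : Fin n := ⟨m, hm⟩
    refine ⟨u * sigmaPerm p n k ^ (a k).val, mul_mem hu (pow_mem (sigmaPerm_mem_PSyl k) _),
      fun x hx i => ?_⟩
    have hxk : (sigmaPerm p n k ^ (a k).val) x = update x k (a k) := by
      rw [sigmaPerm_pow_apply fun j hj => hx j (Nat.lt_succ_of_lt hj), hx k (by simp [k]), zero_add,
        ZMod.natCast_zmod_val]
    have hlow : ∀ j : Fin n, (j : ℕ) < m → update x k (a k) j = 0 := fun j hj => by
      rw [update_of_ne (Fin.ne_of_val_ne hj.ne), hx j (by omega)]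
    rw [Perm.mul_apply, hxk, hux _ hlow]
    rcases lt_trichotomy (i : ℕ) m with hi | hi | hi
    · simp [hi, Nat.lt_succ_of_lt hi]
    · simp [show i = k from Fin.ext hi, k]
    · have hik : i ≠ k := fun h => by simp [h, k] at hi
      simp [not_lt.mpr hi.le, not_le.mpr hi, update_of_ne hik]

variable (p) in
def prefixBlock (x : Fin n → ZMod p) (i : Fin n) : Set (Fin n → ZMod p) :=
  {z | (∀ j < i, z j = x j) ∧ z i = 0}

theorem IsTriangular.apply_notMem_prefixBlock {e : Perm (Fin n → ZMod p)} (he : IsTriangular e)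
    {x y : Fin n → ZMod p} {i : Fin n} (hy : e y i ≠ y i) (hyx : ∀ j < i, y j = x j)
    {z : Fin n → ZMod p} (hz : z ∈ prefixBlock p x i) : e z ∉ prefixBlock p x i := by
  intro hez
  have := he i z y fun j hj => (hz.1 j hj).trans (hyx j hj).symm
  rw [hez.2, hz.2, sub_zero] at this
  exact hy (sub_eq_zero.mp this.symm)

theorem exists_conj_sigmaPerm_supported_prefixBlock [NeZero p] (x : Fin n → ZMod p)
    (i : Fin n) : ∃ u ∈ PSyl p n, ∀ k, i < k →
      ∀ z ∉ prefixBlock p x i, (u * sigmaPerm p n k * u⁻¹) z = z := by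
  obtain ⟨u, hu, hux⟩ := exists_mem_PSyl_apply_eq x i.isLt.le
  refine ⟨u, hu, fun k hik z hz => ?_⟩
  rw [Perm.mul_apply, Perm.mul_apply, sigmaPerm_apply_of_not_forall, Perm.apply_inv_self]
  intro h0
  have huz := hux (u⁻¹ z) fun j hj => h0 j (hj.trans hik)
  simp only [Perm.apply_inv_self] at huz
  exact hz ⟨fun j hj => (huz j).trans (if_pos hj),
    (huz i).trans ((if_neg (lt_irrefl _)).trans (h0 i hik))⟩

theorem le_fixingCoords_succ [Fact (1 < p)] {B : Subgroup (Perm (Fin n → ZMod p))}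
    (hBP : B ≤ PSyl p n) (hBnormal : ∀ g ∈ PSyl p n, ∀ x ∈ B, g * x * g⁻¹ ∈ B)
    (hBab : ∀ a ∈ B, ∀ b ∈ B, a * b = b * a) {l : ℕ} (hl : l + 2 < n)
    (hBl : B ≤ fixingCoords p {k | (k : ℕ) < l}) :
    B ≤ fixingCoords p {k | (k : ℕ) < l + 1} := by
  intro b hb x i hi
  rcases Nat.lt_succ_iff_lt_or_eq.mp hi with hi | rfl
  · exact hBl hb x i hi
  by_contra hmove
  have hsq : ∀ g ∈ PSyl p n, (∀ z ∉ prefixBlock p x i, g z = z) → g ^ 2 = 1 :=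
    fun g hg hgX => Perm.sq_eq_one_of_commute_conj
      (fun _ => (isTriangular_of_mem_PSyl (hBP hb)).apply_notMem_prefixBlock hmove fun _ _ => rfl)
      (fun _ => (isTriangular_of_mem_PSyl (hBP (inv_mem hb))).apply_notMem_prefixBlock
        (by simpa using Ne.symm hmove) fun j hj => hBl hb x j hj)
      hgX (hBab _ hb _ (hBnormal g hg b hb))
  obtain ⟨u, hu, hsupp⟩ := exists_conj_sigmaPerm_supported_prefixBlock x i
  have hmem : ∀ k, u * sigmaPerm p n k * u⁻¹ ∈ PSyl p n := fun k =>
    mul_mem (mul_mem hu (sigmaPerm_mem_PSyl k)) (inv_mem hu)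
  set k₁ : Fin n := ⟨i + 1, by omega⟩
  set k₂ : Fin n := ⟨i + 2, hl⟩
  have h₁ := hsupp k₁ (by simp [k₁, Fin.lt_def])
  have h₂ := hsupp k₂ (by simp [k₂, Fin.lt_def])
  have hcomm := commute_of_sq_eq_one (hsq _ (hmem k₁) h₁) (hsq _ (hmem k₂) h₂)
    (hsq _ (mul_mem (hmem k₁) (hmem k₂)) fun z hz => by rw [Perm.mul_apply, h₂ z hz, h₁ z hz])
  exact sigmaPerm_mul_ne (show k₁ < k₂ by simp [k₁, k₂, Fin.lt_def])
    ((Commute.conj_iff u).mp hcomm).eq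

end

theorem abelian_normal_le_TFilt (hp : p.Prime)
    (B : Subgroup (Equiv.Perm (Fin n → ZMod p)))
    (hBP : B ≤ PSyl p n)
    (hBnormal : ∀ g ∈ PSyl p n, ∀ x ∈ B, g * x * g⁻¹ ∈ B)
    (hBab : ∀ a ∈ B, ∀ b ∈ B, a * b = b * a) :
    B ≤ TFilt p n (n - 2) := by
  have : Fact (1 < p) := ⟨hp.one_lt⟩
  have hfix : ∀ m ≤ n - 2, B ≤ fixingCoords p {k : Fin n | (k : ℕ) < m} := by
    intro m hm
    induction m with
    | zero => exact fun _ _ _ k hk => absurd hk (Nat.not_lt_zero _)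
    | succ m ih => exact le_fixingCoords_succ hBP hBnormal hBab (by omega) (ih (by omega))
  exact fun b hb => PSyl_inf_fixingCoords_le_TFilt (n - 2) ⟨hBP hb, hfix _ le_rfl hb⟩
end
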